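/- arXiv:2403.11637 — 5 statements merged into one kernel-verified Lean document; each statement's English description precedes it below -/
import Mathlib

section
/- For every real x ∈ [0,1] and natural number n, (1 - x)^n ≤ 1 - n·x + n²·x². -/
/-! The bound is the second Bonferroni inequality `(1 - x)^n ≤ 1 - n x + C(n,2) x²`, weakened
via `C(n,2) ≤ n²`. The Bonferroni inequality follows by induction on `n`: multiplying by `1 - x ≥ 0`
produces the next bound plus a term `-C(n,2) x³ ≤ 0`. -/

theorem one_sub_pow_le_one_sub_mul_add_choose_two_mul_sq {R : Type*} [CommRing R] [PartialOrder R]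
    [IsOrderedRing R] {x : R} (hx0 : 0 ≤ x) (hx1 : x ≤ 1) (n : ℕ) :
    (1 - x) ^ n ≤ 1 - n * x + n.choose 2 * x ^ 2 := by
  induction n with
  | zero => simp
  | succ n ih =>
    have h_cube : 0 ≤ (n.choose 2 : R) * x ^ 3 := by positivity
    calc (1 - x) ^ (n + 1) = (1 - x) ^ n * (1 - x) := pow_succ _ _
      _ ≤ (1 - n * x + n.choose 2 * x ^ 2) * (1 - x) :=
          mul_le_mul_of_nonneg_right ih (sub_nonneg.mpr hx1)
      _ = 1 - (n + 1 : ℕ) * x + (n + 1).choose 2 * x ^ 2 - n.choose 2 * x ^ 3 := by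
          rw [Nat.choose_succ_succ, Nat.choose_one_right]
          push_cast
          ring
      _ ≤ 1 - (n + 1 : ℕ) * x + (n + 1).choose 2 * x ^ 2 := sub_le_self _ h_cube

/-- For `x ∈ [0,1]` and `n : ℕ`, `(1 - x)^n ≤ 1 - n·x + n²·x²`. -/
theorem one_sub_pow_le (x : ℝ) (hx0 : 0 ≤ x) (hx1 : x ≤ 1) (n : ℕ) :
    (1 - x) ^ n ≤ 1 - n * x + (n : ℝ) ^ 2 * x ^ 2 := by
  calc (1 - x) ^ n ≤ 1 - n * x + n.choose 2 * x ^ 2 :=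
        one_sub_pow_le_one_sub_mul_add_choose_two_mul_sq hx0 hx1 n
    _ ≤ 1 - n * x + (n : ℝ) ^ 2 * x ^ 2 := by
        gcongr
        exact_mod_cast Nat.choose_le_pow n 2
end

section
/- Let D ⊂ ℝ^d be nonempty, convex and compact with nonnegative coordinates, and let α ∈ ℝ^d with nonnegative coordinates and at least one strictly positive coordinate. Then inf over x ∈ [0,1]^d of max over y ∈ D of (y·x)/(α·x) equals max over y ∈ D of min over i with α_i > 0 of y_i/α_i, with the convention that ratios with zero denominator equal +∞. -/
open scoped ENNReal

/-- Ratio with the convention `a / 0 = +∞`. -/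
noncomputable def erat (a b : ℝ) : ℝ≥0∞ :=
  if b = 0 then ⊤ else ENNReal.ofReal (a / b)

/-!
For `x ≥ 0` with `α ⬝ᵥ x > 0`, the ratio `(y ⬝ᵥ x) / (α ⬝ᵥ x)` is a mediant of the ratios
`y i / α i` over `α i > 0`, the coordinates with `α i = 0` only adding the nonnegative `y i * x i`
to the numerator; so it is at least their minimum, which gives `≥`.

For `≤`, let `t` exceed the right-hand side. Then `D` misses the closed convex orthant
`K = {z | t * α i ≤ z i whenever 0 < α i}`. A functional `z ↦ z ⬝ᵥ c` strictly separating `D` from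
`K` is bounded below on `K`, which forces `c ≥ 0` with support in `{i | 0 < α i}`; rescaled into
the unit cube, `c` is a weight `x` with `y ⬝ᵥ x < t * α ⬝ᵥ x` on all of `D`.
-/

open scoped Matrix

theorem erat_zero_right (a : ℝ) : erat a 0 = ⊤ := if_pos rfl

theorem erat_of_pos {a b : ℝ} (hb : 0 < b) : erat a b = ENNReal.ofReal (a / b) :=
  if_neg hb.ne'

section Ratio

variable {ι : Type*}

theorem exists_lt_mul_of_iInf_erat_lt {α y : ι → ℝ} {t : ℝ}
    (h : ⨅ i ∈ {i | 0 < α i}, erat (y i) (α i) < ENNReal.ofReal t) :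
    ∃ i, 0 < α i ∧ y i < t * α i := by
  simp only [iInf_lt_iff] at h
  obtain ⟨i, hi, hlt⟩ := h
  rw [erat_of_pos hi, ENNReal.ofReal_lt_ofReal_iff'] at hlt
  exact ⟨i, hi, (div_lt_iff₀ hi).1 hlt.1⟩

theorem iInf_erat_le_erat_dotProduct [Fintype ι] {α y x : ι → ℝ} (hα : 0 ≤ α) (hy : 0 ≤ y)
    (hx : 0 ≤ x) :
    ⨅ i ∈ {i | 0 < α i}, erat (y i) (α i) ≤ erat (y ⬝ᵥ x) (α ⬝ᵥ x) := by
  rcases (dotProduct_nonneg_of_nonneg hα hx).eq_or_lt with h | hpos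
  · rw [← h, erat_zero_right]
    exact le_top
  obtain ⟨j, -, hj⟩ := Finset.exists_lt_of_sum_lt (by simpa using hpos : ∑ _j, (0 : ℝ) < α ⬝ᵥ x)
  have hαj : 0 < α j := (hα j).lt_of_ne fun h => by simp [← h] at hj
  set F := ⨅ i ∈ {i | 0 < α i}, erat (y i) (α i)
  have hF : F ≠ ⊤ := ne_top_of_le_ne_top (by simp [erat_of_pos hαj]) (biInf_le _ hαj)
  have hm : F.toReal • α ≤ y := fun i => by
    rcases (hα i).eq_or_lt with h | hi
    · simpa [← h] using hy i
    · rw [Pi.smul_apply, smul_eq_mul, ← le_div_iff₀ hi]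
      exact ENNReal.toReal_le_of_le_ofReal (div_nonneg (hy i) hi.le)
        ((biInf_le (fun i => erat (y i) (α i)) hi).trans (erat_of_pos hi).le)
  rw [← ENNReal.ofReal_toReal hF, erat_of_pos hpos]
  refine ENNReal.ofReal_le_ofReal ((le_div_iff₀ hpos).2 ?_)
  calc F.toReal * α ⬝ᵥ x = (F.toReal • α) ⬝ᵥ x := by rw [smul_dotProduct, smul_eq_mul]
    _ ≤ y ⬝ᵥ x := dotProduct_le_dotProduct_of_nonneg_right hm hx

end Ratio

theorem nonneg_of_forall_lt_add_mul {a b c : ℝ} (h : ∀ τ : ℝ, 0 ≤ τ → b < a + τ * c) :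
    0 ≤ c := by
  by_contra! hc
  have hba : b < a := by simpa using h 0 le_rfl
  have := h ((a - b) / -c) (div_nonneg (sub_nonneg.2 hba.le) (neg_nonneg.2 hc.le))
  rw [div_neg, neg_mul, div_mul_cancel₀ _ hc.ne] at this
  linarith

theorem LinearMap.apply_eq_dotProduct {ι R : Type*} [Fintype ι] [DecidableEq ι]
    [CommSemiring R] (g : (ι → R) →ₗ[R] R) (z : ι → R) : g z = z ⬝ᵥ fun i => g (Pi.single i 1) := by
  conv_lhs => rw [pi_eq_sum_univ' z]
  simp [dotProduct]

section Separation

variable {ι : Type*} [DecidableEq ι]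

theorem add_smul_single_mem_pi {s : Set ι} {w : ι → ℝ} {i : ι} {τ : ℝ} (hτ : i ∈ s → 0 ≤ τ) :
    w + τ • Pi.single i 1 ∈ s.pi fun j => Set.Ici (w j) := by
  intro j _
  by_cases hji : j = i
  · subst hji
    simpa using hτ ‹_›
  · simp [hji]

theorem LinearMap.apply_single_nonneg_of_lt_on_pi (g : (ι → ℝ) →ₗ[ℝ] ℝ) {s : Set ι} {w : ι → ℝ}
    {v : ℝ} (hg : ∀ z ∈ s.pi fun j => Set.Ici (w j), v < g z) (i : ι) :
    0 ≤ g (Pi.single i 1) ∧ (i ∉ s → g (Pi.single i 1) = 0) := by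
  have hline : ∀ τ : ℝ, (i ∈ s → 0 ≤ τ) → v < g w + τ * g (Pi.single i 1) := fun τ hτ => by
    simpa using hg _ (add_smul_single_mem_pi hτ)
  have hnonneg := nonneg_of_forall_lt_add_mul fun τ hτ => hline τ fun _ => hτ
  refine ⟨hnonneg, fun hi => le_antisymm ?_ hnonneg⟩
  have := nonneg_of_forall_lt_add_mul (a := g w) (c := -g (Pi.single i 1)) fun τ _ =>
    (hline (-τ) (absurd · hi)).trans_eq (by ring)
  linarith

variable [Fintype ι]

theorem exists_dotProduct_lt_of_forall_exists_lt {D : Set (ι → ℝ)} (hconv : Convex ℝ D)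
    (hcomp : IsCompact D) {s : Set ι} {w : ι → ℝ} (hD : ∀ y ∈ D, ∃ i ∈ s, y i < w i) :
    ∃ c : ι → ℝ, 0 ≤ c ∧ (∀ i ∉ s, c i = 0) ∧ ∀ y ∈ D, y ⬝ᵥ c < w ⬝ᵥ c := by
  set K := s.pi fun j => Set.Ici (w j)
  have hdisj : Disjoint D K := Set.disjoint_left.2 fun y hy hyK => by
    obtain ⟨i, hi, hlt⟩ := hD y hy
    exact (hyK i hi).not_gt hlt
  obtain ⟨g, u, v, hgD, huv, hgK⟩ := geometric_hahn_banach_compact_closed hconv hcomp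
    (convex_pi fun _ _ => convex_Ici _) (isClosed_set_pi fun _ _ => isClosed_Ici) hdisj
  have hcoef := LinearMap.apply_single_nonneg_of_lt_on_pi g.toLinearMap hgK
  refine ⟨_, fun i => (hcoef i).1, fun i => (hcoef i).2, fun y hy => ?_⟩
  have hw : w ∈ K := fun _ _ => Set.mem_Ici.2 le_rfl
  rw [← g.toLinearMap.apply_eq_dotProduct, ← g.toLinearMap.apply_eq_dotProduct]
  exact ((hgD y hy).trans huv).trans (hgK w hw)

theorem exists_mem_box_dotProduct_lt {D : Set (ι → ℝ)} (hne : D.Nonempty)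
    (hconv : Convex ℝ D) (hcomp : IsCompact D) {α : ι → ℝ} {t : ℝ}
    (hD : ∀ y ∈ D, ∃ i, 0 < α i ∧ y i < t * α i) :
    ∃ x ∈ {x : ι → ℝ | ∀ i, x i ∈ Set.Icc (0 : ℝ) 1},
      0 < α ⬝ᵥ x ∧ ∀ y ∈ D, y ⬝ᵥ x < t * α ⬝ᵥ x := by
  obtain ⟨c, hc, hcs, hsep⟩ :=
    exists_dotProduct_lt_of_forall_exists_lt (s := {i | 0 < α i}) (w := t • α) hconv hcomp hD
  simp only [smul_dotProduct, smul_eq_mul] at hsep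
  have hαc : 0 < α ⬝ᵥ c := by
    obtain ⟨y, hy⟩ := hne
    obtain ⟨i, hci⟩ : ∃ i, c i ≠ 0 := by
      by_contra! h
      simpa [funext h] using hsep y hy
    have hαi : 0 < α i := by_contra fun h => hci (hcs i h)
    have hterm : ∀ j, 0 ≤ α j * c j := fun j =>
      if hj : 0 < α j then mul_nonneg hj.le (hc j) else by simp [hcs j hj]
    exact (mul_pos hαi ((hc i).lt_of_ne' hci)).trans_le
      (Finset.single_le_sum (fun j _ => hterm j) (Finset.mem_univ i))
  have hk : 0 < (‖c‖ + 1)⁻¹ := by positivity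
  refine ⟨(‖c‖ + 1)⁻¹ • c, fun i => ⟨mul_nonneg hk.le (hc i), ?_⟩, ?_, fun y hy => ?_⟩
  · rw [Pi.smul_apply, smul_eq_mul, inv_mul_le_one₀ (by positivity)]
    exact (le_abs_self _).trans ((norm_le_pi_norm c i).trans (le_add_of_nonneg_right zero_le_one))
  · rw [dotProduct_smul, smul_eq_mul]
    exact mul_pos hk hαc
  · rw [dotProduct_smul, dotProduct_smul, smul_eq_mul, smul_eq_mul, mul_left_comm]
    exact mul_lt_mul_of_pos_left (hsep y hy) hk

end Separation

theorem minimax_ratio_general (d : ℕ) (D : Set (Fin d → ℝ))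
    (hne : D.Nonempty) (hconv : Convex ℝ D) (hcomp : IsCompact D)
    (hDnn : ∀ y ∈ D, ∀ i, 0 ≤ y i)
    (α : Fin d → ℝ) (hα : ∀ i, 0 ≤ α i) :
    (⨅ x ∈ {x : Fin d → ℝ | ∀ i, x i ∈ Set.Icc (0 : ℝ) 1},
        ⨆ y ∈ D, erat (∑ i, y i * x i) (∑ i, α i * x i))
      = ⨆ y ∈ D, ⨅ i ∈ {i : Fin d | 0 < α i}, erat (y i) (α i) := by
  apply le_antisymm
  · refine le_of_forall_gt_imp_ge_of_dense fun r hr => ?_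
    obtain ⟨t, -, hDt, htr⟩ := ENNReal.lt_iff_exists_real_btwn.1 hr
    have hD : ∀ y ∈ D, ∃ i, 0 < α i ∧ y i < t * α i := fun y hy =>
      exists_lt_mul_of_iInf_erat_lt ((le_iSup₂ (f := fun y (_ : y ∈ D) =>
        ⨅ i ∈ {i | 0 < α i}, erat (y i) (α i)) y hy).trans_lt hDt)
    obtain ⟨x, hx, hαx, hyx⟩ := exists_mem_box_dotProduct_lt hne hconv hcomp hD
    calc _ ≤ ⨆ y ∈ D, erat (y ⬝ᵥ x) (α ⬝ᵥ x) :=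
          biInf_le (fun x => ⨆ y ∈ D, erat (y ⬝ᵥ x) (α ⬝ᵥ x)) hx
      _ ≤ ENNReal.ofReal t := iSup₂_le fun y hy => by
          rw [erat_of_pos hαx]
          exact ENNReal.ofReal_le_ofReal ((div_le_iff₀ hαx).2 (hyx y hy).le)
      _ ≤ r := htr.le
  · exact le_iInf₂ fun x hx => iSup₂_le fun y hy =>
      (iInf_erat_le_erat_dotProduct hα (hDnn y hy) fun i => (hx i).1).trans
        (le_iSup₂ (f := fun y (_ : y ∈ D) => erat (y ⬝ᵥ x) (α ⬝ᵥ x)) y hy)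

/-- Minimax identity: for a nonempty convex compact set `D ⊆ ℝ^d_{≥0}` and a
nonnegative vector `α` with some positive coordinate,
`inf_{x ∈ [0,1]^d} max_{y ∈ D} (y·x)/(α·x) = max_{y ∈ D} min_{i : α_i > 0} y_i/α_i`,
with the convention that ratios with zero denominator are `+∞`. -/
theorem minimax_ratio (d : ℕ) (D : Set (Fin d → ℝ))
    (hne : D.Nonempty) (hconv : Convex ℝ D) (hcomp : IsCompact D)
    (hDnn : ∀ y ∈ D, ∀ i, 0 ≤ y i)
    (α : Fin d → ℝ) (hα : ∀ i, 0 ≤ α i) (hα0 : ∃ i, 0 < α i) :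
    (⨅ x ∈ {x : Fin d → ℝ | ∀ i, x i ∈ Set.Icc (0 : ℝ) 1},
        ⨆ y ∈ D, erat (∑ i, y i * x i) (∑ i, α i * x i))
      = ⨆ y ∈ D, ⨅ i ∈ {i : Fin d | 0 < α i}, erat (y i) (α i) :=
  minimax_ratio_general d D hne hconv hcomp hDnn α hα
end

section
/- Let D ⊂ ℝ^d_{≥0} be nonempty convex compact. The function f(α) = max over y ∈ D of min over i ∈ [d] of y_i/α_i (with convention a/0 = +∞) is quasi-concave on ℝ^d_{≥0}: for all α, β ∈ ℝ^d_{≥0} and λ ∈ (0,1), f(λα + (1-λ)β) ≥ min{f(α), f(β)}. -/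
/-!
If `r < f(α)` and `r < f(β)`, pick `y, z ∈ D` with `r • α ≤ y` and `r • β ≤ z` componentwise.
By convexity `λ y + (1 - λ) z ∈ D`, and it dominates `r • (λ α + (1 - λ) β)`, so `r ≤ f(λ α + (1 - λ) β)`.
-/

open scoped ENNReal NNReal

section erat

variable {a b : ℝ} {r : ℝ≥0}

lemma mul_le_of_coe_lt_erat (ha : 0 ≤ a) (hb : 0 ≤ b) (h : (r : ℝ≥0∞) < erat a b) :
    r * b ≤ a := by
  rcases hb.eq_or_lt with rfl | hb
  · simpa using ha
  · rw [erat, if_neg hb.ne', ENNReal.lt_ofReal_iff_toReal_lt ENNReal.coe_ne_top] at h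
    exact (lt_div_iff₀ hb).mp h |>.le

lemma coe_le_erat_of_mul_le (hb : 0 ≤ b) (h : r * b ≤ a) : (r : ℝ≥0∞) ≤ erat a b := by
  rcases hb.eq_or_lt with rfl | hb
  · simp [erat]
  · rw [erat, if_neg hb.ne', ← ENNReal.ofReal_coe_nnreal]
    exact ENNReal.ofReal_le_ofReal ((le_div_iff₀ hb).mpr h)

end erat

section iInf_erat

variable {ι : Type*} {a b : ι → ℝ} {r : ℝ≥0}

lemma coe_le_iInf_erat_of_smul_le (hb : 0 ≤ b) (h : (r : ℝ) • b ≤ a) :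
    (r : ℝ≥0∞) ≤ ⨅ i, erat (a i) (b i) :=
  le_iInf fun i => coe_le_erat_of_mul_le (hb i) (h i)

lemma exists_mem_smul_le_of_coe_lt_iSup_iInf_erat {D : Set (ι → ℝ)} (hD : ∀ y ∈ D, 0 ≤ y)
    (hb : 0 ≤ b) (h : (r : ℝ≥0∞) < ⨆ y ∈ D, ⨅ i, erat (y i) (b i)) :
    ∃ y ∈ D, (r : ℝ) • b ≤ y := by
  simp only [lt_iSup_iff] at h
  obtain ⟨y, hyD, hy⟩ := h
  exact ⟨y, hyD, fun i =>
    mul_le_of_coe_lt_erat (hD y hyD i) (hb i) (hy.trans_le (iInf_le _ i))⟩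

end iInf_erat

theorem quasiconcave_max_min_ratio_general (d : ℕ) (D : Set (Fin d → ℝ))
    (hconv : Convex ℝ D)
    (hDnn : ∀ y ∈ D, ∀ i, 0 ≤ y i)
    (α β : Fin d → ℝ) (hα : ∀ i, 0 ≤ α i) (hβ : ∀ i, 0 ≤ β i)
    (lam : ℝ) (hlam0 : 0 < lam) (hlam1 : lam < 1) :
    min (⨆ y ∈ D, ⨅ i, erat (y i) (α i)) (⨆ y ∈ D, ⨅ i, erat (y i) (β i))
      ≤ ⨆ y ∈ D, ⨅ i, erat (y i) ((lam • α + (1 - lam) • β) i) := by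
  refine ENNReal.le_of_forall_nnreal_lt fun r hr => ?_
  obtain ⟨y, hyD, hy⟩ :=
    exists_mem_smul_le_of_coe_lt_iSup_iInf_erat hDnn hα (hr.trans_le (min_le_left _ _))
  obtain ⟨z, hzD, hz⟩ :=
    exists_mem_smul_le_of_coe_lt_iSup_iInf_erat hDnn hβ (hr.trans_le (min_le_right _ _))
  have hlam1' : 0 ≤ 1 - lam := sub_nonneg.2 hlam1.le
  refine le_iSup₂_of_le _ (hconv hyD hzD hlam0.le hlam1' (add_sub_cancel lam 1))
    (coe_le_iInf_erat_of_smul_le ?_ ?_)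
  · exact add_nonneg (smul_nonneg hlam0.le hα) (smul_nonneg hlam1' hβ)
  · calc (r : ℝ) • (lam • α + (1 - lam) • β)
        = lam • ((r : ℝ) • α) + (1 - lam) • ((r : ℝ) • β) := by module
      _ ≤ lam • y + (1 - lam) • z := by gcongr

/-- For a nonempty convex compact `D ⊆ ℝ^d_{≥0}`, the function
`f(α) = max_{y ∈ D} min_i y_i/α_i` (with `a/0 = +∞`) is quasi-concave on `ℝ^d_{≥0}`. -/
theorem quasiconcave_max_min_ratio (d : ℕ) (D : Set (Fin d → ℝ))
    (hne : D.Nonempty) (hconv : Convex ℝ D) (hcomp : IsCompact D)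
    (hDnn : ∀ y ∈ D, ∀ i, 0 ≤ y i)
    (α β : Fin d → ℝ) (hα : ∀ i, 0 ≤ α i) (hβ : ∀ i, 0 ≤ β i)
    (lam : ℝ) (hlam0 : 0 < lam) (hlam1 : lam < 1) :
    min (⨆ y ∈ D, ⨅ i, erat (y i) (α i)) (⨆ y ∈ D, ⨅ i, erat (y i) (β i))
      ≤ ⨆ y ∈ D, ⨅ i, erat (y i) ((lam • α + (1 - lam) • β) i) :=
  quasiconcave_max_min_ratio_general d D hconv hDnn α β hα hβ lam hlam0 hlam1
end

section
/- Consider a finite-horizon MDP with value functions defined by the Bellman recursions V̄_h(s|R) = max_a { R_h(s,a) + Σ_{s'} P_h(s'|s,a) V̄_{h+1}(s'|R) } with V̄_{H+1} = 0, where R is a random nonnegative reward with E[R_h(s,a)] = r_h(s,a), and V⁰_h(s) = max_a { r_h(s,a) + Σ_{s'} P_h(s'|s,a) V⁰_{h+1}(s') } with V⁰_{H+1} = 0. Then for all h ∈ [H+1] and all states s, E[V̄_h(s|R)] ≤ A^{H+1-h} · V⁰_h(s), where A is the number of actions. -/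
open MeasureTheory

/-!
Bound the maximum over actions by the sum over actions, which is legitimate because every term
is nonnegative. Taking expectations then turns each random reward into its mean and, by linearity,
each continuation value into its expectation; by backward induction on `h` these are at most
`A^{H-h}` times the no-lookahead values, and summing over the `A` actions costs one more factor `A`.
-/

noncomputable def bellmanBackup {S A : Type*} [Fintype S] (r : A → ℝ) (P : A → S → ℝ)
    (V : S → ℝ) : ℝ :=
  ⨆ a, (r a + ∑ s', P a s' * V s')

lemma Real.iSup_le_sum {ι : Type*} [Fintype ι] {f : ι → ℝ} (hf : 0 ≤ f) :
    ⨆ i, f i ≤ ∑ i, f i :=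
  Real.iSup_le (fun i => Finset.single_le_sum (fun j _ => hf j) (Finset.mem_univ i))
    (Finset.sum_nonneg fun i _ => hf i)

lemma integral_add_sum_mul {ι Ω : Type*} [MeasurableSpace Ω] {μ : Measure Ω} {s : Finset ι}
    {f : Ω → ℝ} {g : ι → Ω → ℝ} {c : ι → ℝ} (hf : Integrable f μ) (hg : ∀ i, Integrable (g i) μ) :
    ∫ ω, (f ω + ∑ i ∈ s, c i * g i ω) ∂μ = ∫ ω, f ω ∂μ + ∑ i ∈ s, c i * ∫ ω, g i ω ∂μ := by
  rw [integral_add hf (integrable_finsetSum _ fun i _ => (hg i).const_mul _),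
    integral_finsetSum _ fun i _ => (hg i).const_mul _]
  simp only [integral_const_mul]

section BellmanBackup

variable {S A : Type*} [Fintype S] {r : A → ℝ} {P : A → S → ℝ} {V : S → ℝ}

lemma bellmanBackup_nonneg (hr : 0 ≤ r) (hP : 0 ≤ P) (hV : 0 ≤ V) :
    0 ≤ bellmanBackup r P V :=
  Real.iSup_nonneg fun a =>
    add_nonneg (hr a) (Finset.sum_nonneg fun s' _ => mul_nonneg (hP a s') (hV s'))

lemma le_bellmanBackup [Finite A] (a : A) :
    r a + ∑ s', P a s' * V s' ≤ bellmanBackup r P V :=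
  le_ciSup (f := fun a => r a + ∑ s', P a s' * V s') (Set.finite_range _).bddAbove a

theorem integral_bellmanBackup_le [Fintype A] {Ω : Type*} [MeasurableSpace Ω] {μ : Measure Ω}
    {R : A → Ω → ℝ} {W : S → Ω → ℝ} {v : S → ℝ} {d : ℕ} (hP : 0 ≤ P)
    (hR : ∀ a ω, 0 ≤ R a ω) (hR_int : ∀ a, Integrable (R a) μ)
    (hW : ∀ s ω, 0 ≤ W s ω) (hW_int : ∀ s, Integrable (W s) μ)
    (hWv : ∀ s, ∫ ω, W s ω ∂μ ≤ (Fintype.card A : ℝ) ^ d * v s) :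
    ∫ ω, bellmanBackup (fun a => R a ω) P (fun s => W s ω) ∂μ ≤
      (Fintype.card A : ℝ) ^ (d + 1) * bellmanBackup (fun a => ∫ ω, R a ω ∂μ) P v := by
  set C : ℝ := (Fintype.card A : ℝ) ^ d
  set Q : A → Ω → ℝ := fun a ω => R a ω + ∑ s', P a s' * W s' ω
  have hQ_nonneg : ∀ a ω, 0 ≤ Q a ω := fun a ω =>
    add_nonneg (hR a ω) (Finset.sum_nonneg fun s' _ => mul_nonneg (hP a s') (hW s' ω))
  have hQ_int : ∀ a, Integrable (Q a) μ := fun a =>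
    (hR_int a).add (integrable_finsetSum _ fun s' _ => (hW_int s').const_mul _)
  have hQ_integral_le : ∀ a,
      ∫ ω, Q a ω ∂μ ≤ C * bellmanBackup (fun a => ∫ ω, R a ω ∂μ) P v := fun a => by
    have hC : 1 ≤ C := one_le_pow₀ (Nat.one_le_cast.2 (Fintype.card_pos_iff.2 ⟨a⟩))
    calc ∫ ω, Q a ω ∂μ = ∫ ω, R a ω ∂μ + ∑ s', P a s' * ∫ ω, W s' ω ∂μ :=
          integral_add_sum_mul (hR_int a) hW_int
      _ ≤ C * ∫ ω, R a ω ∂μ + C * ∑ s', P a s' * v s' := by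
        rw [Finset.mul_sum]
        refine add_le_add (le_mul_of_one_le_left (integral_nonneg (hR a)) hC)
          (Finset.sum_le_sum fun s' _ => ?_)
        rw [mul_left_comm]
        exact mul_le_mul_of_nonneg_left (hWv s') (hP a s')
      _ ≤ C * bellmanBackup (fun a => ∫ ω, R a ω ∂μ) P v := by
        rw [← mul_add]
        exact mul_le_mul_of_nonneg_left
          (le_bellmanBackup (r := fun a => ∫ ω, R a ω ∂μ) a) (by positivity)
  calc ∫ ω, bellmanBackup (fun a => R a ω) P (fun s => W s ω) ∂μ
      ≤ ∫ ω, ∑ a, Q a ω ∂μ :=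
        integral_mono_of_nonneg
          (ae_of_all _ fun ω => bellmanBackup_nonneg (hR · ω) hP (hW · ω))
          (integrable_finsetSum _ fun a _ => hQ_int a)
          (ae_of_all _ fun ω => Real.iSup_le_sum fun a => hQ_nonneg a ω)
    _ = ∑ a, ∫ ω, Q a ω ∂μ := integral_finsetSum _ fun a _ => hQ_int a
    _ ≤ ∑ _a : A, C * bellmanBackup (fun a => ∫ ω, R a ω ∂μ) P v :=
        Finset.sum_le_sum fun a _ => hQ_integral_le a
    _ = (Fintype.card A : ℝ) ^ (d + 1) * bellmanBackup (fun a => ∫ ω, R a ω ∂μ) P v := by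
        rw [Finset.sum_const, Finset.card_univ, nsmul_eq_mul, pow_succ', mul_assoc]

end BellmanBackup

theorem expected_lookahead_value_le_card_pow_mul_value_general
    {S A : Type} [Fintype S] [Fintype A]
    {Ω : Type} [MeasureSpace Ω]
    (H : ℕ) (P : ℕ → S → A → S → ℝ)
    (hP : ∀ h s a, (∀ s', 0 ≤ P h s a s') ∧ ∑ s', P h s a s' = 1)
    (R : ℕ → S → A → Ω → ℝ) (hRnn : ∀ h s a ω, 0 ≤ R h s a ω)
    (hRint : ∀ h s a, Integrable (R h s a))
    (r : ℕ → S → A → ℝ) (hr : ∀ h s a, r h s a = ∫ ω, R h s a ω)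
    (Vbar : ℕ → S → Ω → ℝ) (V0 : ℕ → S → ℝ)
    (hVbarInt : ∀ h s, Integrable (Vbar h s))
    (hVbarTop : ∀ s ω, Vbar (H + 1) s ω = 0)
    (hVbarRec : ∀ h, 1 ≤ h → h ≤ H → ∀ s ω,
      Vbar h s ω = ⨆ a, (R h s a ω + ∑ s', P h s a s' * Vbar (h + 1) s' ω))
    (hV0Top : ∀ s, V0 (H + 1) s = 0)
    (hV0Rec : ∀ h, 1 ≤ h → h ≤ H → ∀ s,
      V0 h s = ⨆ a, (r h s a + ∑ s', P h s a s' * V0 (h + 1) s')) :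
    ∀ h, 1 ≤ h → h ≤ H + 1 → ∀ s,
      (∫ ω, Vbar h s ω) ≤ (Fintype.card A : ℝ) ^ (H + 1 - h) * V0 h s := by
  have hVbar_nonneg : ∀ h, 1 ≤ h → h ≤ H + 1 → ∀ s ω, 0 ≤ Vbar h s ω := by
    intro h h1 hh
    refine Nat.decreasingInduction' (fun k hk hhk ih s ω => ?_) hh (by simp [hVbarTop])
    rw [hVbarRec k (h1.trans hhk) (by omega)]
    exact bellmanBackup_nonneg (hRnn k s · ω) (fun a => (hP k s a).1) (ih · ω)
  intro h h1 hh
  refine Nat.decreasingInduction' (fun k hk hhk ih s => ?_) hh (by simp [hVbarTop, hV0Top])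
  have hk1 : 1 ≤ k := h1.trans hhk
  have hstep := integral_bellmanBackup_le (μ := volume) (P := P k s) (fun a => (hP k s a).1)
    (hRnn k s) (hRint k s) (hVbar_nonneg (k + 1) (by omega) (by omega)) (hVbarInt (k + 1)) ih
  rw [show H + 1 - k = H + 1 - (k + 1) + 1 by omega, hV0Rec k hk1 (by omega) s,
    integral_congr_ae (ae_of_all _ (hVbarRec k hk1 (by omega) s))]
  simp only [hr]
  exact hstep

/-- Bellman comparison: in a finite-horizon MDP with nonnegative random rewards `R`
(with expectations `r`), the full-lookahead Bellman values `V̄_h(s|R)` and the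
no-lookahead Bellman values `V⁰_h(s)` satisfy
`E[V̄_h(s|R)] ≤ A^{H+1-h} · V⁰_h(s)` for all `h ∈ [H+1]` and all states `s`. -/
theorem expected_lookahead_value_le_card_pow_mul_value
    {S A : Type} [Fintype S] [Fintype A] [Nonempty S] [Nonempty A]
    {Ω : Type} [MeasureSpace Ω] [IsProbabilityMeasure (volume : Measure Ω)]
    (H : ℕ) (P : ℕ → S → A → S → ℝ)
    (hP : ∀ h s a, (∀ s', 0 ≤ P h s a s') ∧ ∑ s', P h s a s' = 1)
    (R : ℕ → S → A → Ω → ℝ) (hRnn : ∀ h s a ω, 0 ≤ R h s a ω)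
    (hRint : ∀ h s a, Integrable (R h s a))
    (r : ℕ → S → A → ℝ) (hr : ∀ h s a, r h s a = ∫ ω, R h s a ω)
    (Vbar : ℕ → S → Ω → ℝ) (V0 : ℕ → S → ℝ)
    (hVbarInt : ∀ h s, Integrable (Vbar h s))
    (hVbarTop : ∀ s ω, Vbar (H + 1) s ω = 0)
    (hVbarRec : ∀ h, 1 ≤ h → h ≤ H → ∀ s ω,
      Vbar h s ω = ⨆ a, (R h s a ω + ∑ s', P h s a s' * Vbar (h + 1) s' ω))
    (hV0Top : ∀ s, V0 (H + 1) s = 0)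
    (hV0Rec : ∀ h, 1 ≤ h → h ≤ H → ∀ s,
      V0 h s = ⨆ a, (r h s a + ∑ s', P h s a s' * V0 (h + 1) s')) :
    ∀ h, 1 ≤ h → h ≤ H + 1 → ∀ s,
      (∫ ω, Vbar h s ω) ≤ (Fintype.card A : ℝ) ^ (H + 1 - h) * V0 h s :=
  expected_lookahead_value_le_card_pow_mul_value_general H P hP R hRnn hRint r hr Vbar V0 hVbarInt
    hVbarTop hVbarRec hV0Top hV0Rec
end

section
/- Under long-shot rewards R_h(s,a) which equal r_h(s,a)/ε with probability ε and 0 otherwise, independently across all (h,s,a), the full-lookahead value satisfies E_R[ max_π Σ_{h,s,a} d^π_h(s,a) R_h(s,a) ] ≥ (1-ε)^{SAH-1} · Σ_{h,s,a} d*_h(s) r_h(s,a). -/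
open MeasureTheory

def IsPolicy {S A : Type} [Fintype A] (π : ℕ → S → A → ℝ) : Prop :=
  ∀ h s, (∀ a, 0 ≤ π h s a) ∧ ∑ a, π h s a = 1

noncomputable def occ {S A : Type} [Fintype S] [Fintype A]
    (P : ℕ → S → A → S → ℝ) (μ : S → ℝ) (π : ℕ → S → A → ℝ) : ℕ → S → ℝ
  | 0 => μ
  | h + 1 => fun s' => ∑ s, ∑ a, occ P μ π h s * π h s a * P h s a s'

noncomputable def occSA {S A : Type} [Fintype S] [Fintype A]
    (P : ℕ → S → A → S → ℝ) (μ : S → ℝ) (π : ℕ → S → A → ℝ)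
    (h : ℕ) (s : S) (a : A) : ℝ :=
  occ P μ π h s * π h s a

section Aux

variable {S A : Type} [Fintype S] [Fintype A]
variable {P : ℕ → S → A → S → ℝ} {μ : S → ℝ}

lemma occ_nonneg (hP : ∀ h s a, (∀ s', 0 ≤ P h s a s') ∧ ∑ s', P h s a s' = 1)
    (hμnn : ∀ s, 0 ≤ μ s) {π : ℕ → S → A → ℝ} (hπ : IsPolicy π) :
    ∀ h s, 0 ≤ occ P μ π h s := by
  intro h
  induction h with
  | zero => exact hμnn
  | succ k ih =>
    intro s'
    simp only [occ]
    exact Finset.sum_nonneg fun s _ => Finset.sum_nonneg fun a _ =>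
      mul_nonneg (mul_nonneg (ih s) ((hπ k s).1 a)) ((hP k s a).1 s')

lemma occ_sum_one (hP : ∀ h s a, (∀ s', 0 ≤ P h s a s') ∧ ∑ s', P h s a s' = 1)
    (hμ1 : ∑ s, μ s = 1) {π : ℕ → S → A → ℝ} (hπ : IsPolicy π) :
    ∀ h, ∑ s, occ P μ π h s = 1 := by
  intro h
  induction h with
  | zero => exact hμ1
  | succ k ih =>
    simp only [occ]
    rw [Finset.sum_comm]
    have h1 : ∀ s, ∑ s', ∑ a, occ P μ π k s * π k s a * P k s a s' = occ P μ π k s := by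
      intro s
      rw [Finset.sum_comm]
      have h2 : ∀ a, ∑ s', occ P μ π k s * π k s a * P k s a s'
          = occ P μ π k s * π k s a := by
        intro a; rw [← Finset.mul_sum, (hP k s a).2, mul_one]
      rw [Finset.sum_congr rfl fun a _ => h2 a, ← Finset.mul_sum, (hπ k s).2, mul_one]
    rw [Finset.sum_congr rfl fun s _ => h1 s, ih]

lemma occ_le_one (hP : ∀ h s a, (∀ s', 0 ≤ P h s a s') ∧ ∑ s', P h s a s' = 1)
    (hμnn : ∀ s, 0 ≤ μ s) (hμ1 : ∑ s, μ s = 1)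
    {π : ℕ → S → A → ℝ} (hπ : IsPolicy π) (h : ℕ) (s : S) :
    occ P μ π h s ≤ 1 := by
  calc occ P μ π h s ≤ ∑ s', occ P μ π h s' :=
        Finset.single_le_sum (fun s' _ => occ_nonneg hP hμnn hπ h s') (Finset.mem_univ s)
    _ = 1 := occ_sum_one hP hμ1 hπ h

lemma policy_le_one {π : ℕ → S → A → ℝ} (hπ : IsPolicy π) (h : ℕ) (s : S) (a : A) :
    π h s a ≤ 1 := by
  calc π h s a ≤ ∑ a', π h s a' :=
        Finset.single_le_sum (fun a' _ => (hπ h s).1 a') (Finset.mem_univ a)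
    _ = 1 := (hπ h s).2

lemma occSA_nonneg (hP : ∀ h s a, (∀ s', 0 ≤ P h s a s') ∧ ∑ s', P h s a s' = 1)
    (hμnn : ∀ s, 0 ≤ μ s) {π : ℕ → S → A → ℝ} (hπ : IsPolicy π) (h : ℕ) (s : S) (a : A) :
    0 ≤ occSA P μ π h s a :=
  mul_nonneg (occ_nonneg hP hμnn hπ h s) ((hπ h s).1 a)

lemma occSA_le_one (hP : ∀ h s a, (∀ s', 0 ≤ P h s a s') ∧ ∑ s', P h s a s' = 1)
    (hμnn : ∀ s, 0 ≤ μ s) (hμ1 : ∑ s, μ s = 1)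
    {π : ℕ → S → A → ℝ} (hπ : IsPolicy π) (h : ℕ) (s : S) (a : A) :
    occSA P μ π h s a ≤ 1 := by
  have := mul_le_mul (occ_le_one hP hμnn hμ1 hπ h s) (policy_le_one hπ h s a)
    ((hπ h s).1 a) zero_le_one
  simpa [occSA] using this

lemma occ_congr {π₁ π₂ : ℕ → S → A → ℝ} (h : ℕ)
    (hagree : ∀ k, k < h → ∀ s a, π₁ k s a = π₂ k s a) :
    ∀ s, occ P μ π₁ h s = occ P μ π₂ h s := by
  induction h with
  | zero => intro s; rfl
  | succ k ih =>
    intro s'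
    simp only [occ]
    refine Finset.sum_congr rfl fun s _ => Finset.sum_congr rfl fun a _ => ?_
    rw [ih (fun j hj => hagree j (hj.trans (Nat.lt_succ_self k))) s,
      hagree k (Nat.lt_succ_self k) s a]

/-- Modify a policy to take action `a0` deterministically at `(h0, s0)`. -/
def modPol [DecidableEq S] [DecidableEq A] (π : ℕ → S → A → ℝ) (h0 : ℕ) (s0 : S) (a0 : A) :
    ℕ → S → A → ℝ :=
  fun h s a => if h = h0 ∧ s = s0 then (if a = a0 then 1 else 0) else π h s a

lemma modPol_isPolicy [DecidableEq S] [DecidableEq A] {π : ℕ → S → A → ℝ} (hπ : IsPolicy π)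
    (h0 : ℕ) (s0 : S) (a0 : A) : IsPolicy (modPol π h0 s0 a0) := by
  intro h s
  constructor
  · intro a
    by_cases hc : h = h0 ∧ s = s0
    · simp only [modPol, if_pos hc]
      by_cases ha : a = a0 <;> simp [ha]
    · simp only [modPol, if_neg hc]
      exact (hπ h s).1 a
  · by_cases hc : h = h0 ∧ s = s0
    · simp [modPol, if_pos hc]
    · simp only [modPol, if_neg hc]
      exact (hπ h s).2

lemma modPol_occ [DecidableEq S] [DecidableEq A] {π : ℕ → S → A → ℝ}
    (h0 : ℕ) (s0 : S) (a0 : A) (s : S) :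
    occ P μ (modPol π h0 s0 a0) h0 s = occ P μ π h0 s :=
  occ_congr h0 (fun k hk s a => by simp [modPol, Nat.ne_of_lt hk]) s

lemma modPol_apply_self [DecidableEq S] [DecidableEq A] (π : ℕ → S → A → ℝ)
    (h0 : ℕ) (s0 : S) (a0 : A) : modPol π h0 s0 a0 h0 s0 a0 = 1 := by
  simp [modPol]

lemma sum_triple {H : ℕ} (F : ℕ → S → A → ℝ) :
    ∑ h ∈ Finset.range H, ∑ s : S, ∑ a : A, F h s a
      = ∑ x : Fin H × S × A, F x.1 x.2.1 x.2.2 := by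
  rw [Fintype.sum_prod_type, ← Fin.sum_univ_eq_sum_range (fun h => ∑ s : S, ∑ a : A, F h s a) H]
  exact Finset.sum_congr rfl fun i _ => by rw [Fintype.sum_prod_type]

end Aux

section Main

variable {S A : Type} [Fintype S] [Fintype A]

/-- The sum `∑_x occSA(x) · v(x)` as a function of the reward vector `v`. -/
noncomputable def gval (P : ℕ → S → A → S → ℝ) (μ : S → ℝ) (H : ℕ)
    (π : ℕ → S → A → ℝ) (v : Fin H × S × A → ℝ) : ℝ :=
  ∑ x : Fin H × S × A, occSA P μ π x.1 x.2.1 x.2.2 * v x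

lemma gval_le_add {P : ℕ → S → A → S → ℝ} {μ : S → ℝ}
    (hP : ∀ h s a, (∀ s', 0 ≤ P h s a s') ∧ ∑ s', P h s a s' = 1)
    (hμnn : ∀ s, 0 ≤ μ s) (hμ1 : ∑ s, μ s = 1) {H : ℕ}
    {π : ℕ → S → A → ℝ} (hπ : IsPolicy π) (v w : Fin H × S × A → ℝ) :
    gval P μ H π v ≤ gval P μ H π w + ∑ x : Fin H × S × A, |v x - w x| := by
  have hdiff : gval P μ H π v - gval P μ H π w
      = ∑ x : Fin H × S × A, occSA P μ π x.1 x.2.1 x.2.2 * (v x - w x) := by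
    simp [gval, ← Finset.sum_sub_distrib, mul_sub]
  have hle : gval P μ H π v - gval P μ H π w ≤ ∑ x : Fin H × S × A, |v x - w x| := by
    rw [hdiff]
    refine Finset.sum_le_sum fun x _ => ?_
    have h1 : occSA P μ π x.1 x.2.1 x.2.2 * (v x - w x)
        ≤ occSA P μ π x.1 x.2.1 x.2.2 * |v x - w x| :=
      mul_le_mul_of_nonneg_left (le_abs_self _) (occSA_nonneg hP hμnn hπ _ _ _)
    have h2 : occSA P μ π x.1 x.2.1 x.2.2 * |v x - w x| ≤ 1 * |v x - w x| :=
      mul_le_mul_of_nonneg_right (occSA_le_one hP hμnn hμ1 hπ _ _ _) (abs_nonneg _)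
    rw [one_mul] at h2
    exact h1.trans h2
  linarith

end Main

/-- Under long-shot rewards (`R_h(s,a) = r_h(s,a)/ε` with probability `ε`,
and `0` otherwise, independently across all `(h,s,a)`), the full-lookahead value
is at least `(1-ε)^{SAH-1} · Σ_{h,s,a} d*_h(s) · r_h(s,a)`. -/
theorem full_lookahead_value_longshot_ge
    {S A : Type} [Fintype S] [Fintype A] [Nonempty S] [Nonempty A]
    {Ω : Type} [MeasureSpace Ω] [IsProbabilityMeasure (volume : Measure Ω)]
    (H : ℕ) (P : ℕ → S → A → S → ℝ)
    (hP : ∀ h s a, (∀ s', 0 ≤ P h s a s') ∧ ∑ s', P h s a s' = 1)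
    (μ : S → ℝ) (hμnn : ∀ s, 0 ≤ μ s) (hμ1 : ∑ s, μ s = 1)
    (ε : ℝ) (hε0 : 0 < ε) (hε1 : ε < 1)
    (r : ℕ → S → A → ℝ) (hrnn : ∀ h s a, 0 ≤ r h s a)
    (R : ℕ → S → A → Ω → ℝ)
    (hRmeas : ∀ h s a, Measurable (R h s a))
    (hRvals : ∀ h s a ω, R h s a ω = r h s a / ε ∨ R h s a ω = 0)
    (hRprob : ∀ h s a, (volume : Measure Ω) {ω | R h s a ω = r h s a / ε}
      = ENNReal.ofReal ε)
    (hRindep : ProbabilityTheory.iIndepFun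
      (m := fun _ : Fin H × S × A => (inferInstance : MeasurableSpace ℝ))
      (fun x ω => R x.1 x.2.1 x.2.2 ω) (volume : Measure Ω)) :
    (1 - ε) ^ (Fintype.card S * Fintype.card A * H - 1) *
        ∑ h ∈ Finset.range H, ∑ s, ∑ a,
          (⨆ π : {π : ℕ → S → A → ℝ // IsPolicy π}, occ P μ π.1 h s) * r h s a
      ≤ ∫ ω, ⨆ π : {π : ℕ → S → A → ℝ // IsPolicy π},
          ∑ h ∈ Finset.range H, ∑ s, ∑ a, occSA P μ π.1 h s a * R h s a ω := by
  classical
  -- the uniform policy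
  have hπ0 : IsPolicy (fun (_ : ℕ) (_ : S) (_ : A) => ((Fintype.card A : ℝ))⁻¹) := by
    intro h s
    refine ⟨fun a => by positivity, ?_⟩
    rw [Finset.sum_const, Finset.card_univ, nsmul_eq_mul,
      mul_inv_cancel₀ (Nat.cast_ne_zero.2 Fintype.card_ne_zero)]
  haveI hne : Nonempty {π : ℕ → S → A → ℝ // IsPolicy π} := ⟨⟨_, hπ0⟩⟩
  -- rewards are strictly positive (else `hRprob` is contradictory)
  have hrpos : ∀ h s a, 0 < r h s a := by
    intro h s a
    rcases (hrnn h s a).lt_or_eq with h' | h'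
    · exact h'
    · exfalso
      have hall : {ω | R h s a ω = r h s a / ε} = Set.univ := by
        ext ω
        simp only [Set.mem_setOf_eq, Set.mem_univ, iff_true]
        rcases hRvals h s a ω with h2 | h2
        · exact h2
        · rw [h2, ← h', zero_div]
      have h3 := hRprob h s a
      rw [hall, measure_univ] at h3
      have h4 : ENNReal.ofReal ε < 1 := by
        rw [← ENNReal.ofReal_one]
        exact ENNReal.ofReal_lt_ofReal_iff_of_nonneg hε0.le |>.2 hε1
      rw [← h3] at h4
      exact lt_irrefl _ h4
  set N := Fintype.card (Fin H × S × A) with hN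
  -- reward vector
  set Rvec : Ω → (Fin H × S × A → ℝ) := fun ω x => R x.1 x.2.1 x.2.2 ω with hRvec
  set f : Ω → ℝ := fun ω => ⨆ π : {π : ℕ → S → A → ℝ // IsPolicy π},
    gval P μ H π.1 (Rvec ω) with hf
  have hf_eq : (fun ω => ⨆ π : {π : ℕ → S → A → ℝ // IsPolicy π},
      ∑ h ∈ Finset.range H, ∑ s, ∑ a, occSA P μ π.1 h s a * R h s a ω) = f := by
    funext ω
    exact iSup_congr fun π => sum_triple (fun h s a => occSA P μ π.1 h s a * R h s a ω)
  -- pointwise bounds on rewards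
  have hRnn : ∀ h s a ω, 0 ≤ R h s a ω := by
    intro h s a ω
    rcases hRvals h s a ω with h2 | h2
    · rw [h2]; exact div_nonneg (hrnn h s a) hε0.le
    · rw [h2]
  have hRle : ∀ h s a ω, R h s a ω ≤ r h s a / ε := by
    intro h s a ω
    rcases hRvals h s a ω with h2 | h2
    · rw [h2]
    · rw [h2]; exact div_nonneg (hrnn h s a) hε0.le
  set B : ℝ := ∑ x : Fin H × S × A, r x.1 x.2.1 x.2.2 / ε with hB
  have hg_nn : ∀ π : {π : ℕ → S → A → ℝ // IsPolicy π}, ∀ ω, 0 ≤ gval P μ H π.1 (Rvec ω) :=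
    fun π ω => Finset.sum_nonneg fun x _ =>
      mul_nonneg (occSA_nonneg hP hμnn π.2 _ _ _) (hRnn _ _ _ _)
  have hg_le : ∀ π : {π : ℕ → S → A → ℝ // IsPolicy π}, ∀ ω, gval P μ H π.1 (Rvec ω) ≤ B := by
    intro π ω
    refine Finset.sum_le_sum fun x _ => ?_
    calc occSA P μ π.1 x.1 x.2.1 x.2.2 * Rvec ω x ≤ 1 * Rvec ω x :=
          mul_le_mul_of_nonneg_right (occSA_le_one hP hμnn hμ1 π.2 _ _ _) (hRnn _ _ _ _)
      _ = Rvec ω x := one_mul _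
      _ ≤ r x.1 x.2.1 x.2.2 / ε := hRle _ _ _ _
  have hbdd : ∀ ω, BddAbove (Set.range fun π : {π : ℕ → S → A → ℝ // IsPolicy π} =>
      gval P μ H π.1 (Rvec ω)) := by
    intro ω
    exact ⟨B, by rintro y ⟨π, rfl⟩; exact hg_le π ω⟩
  have hf_nn : ∀ ω, 0 ≤ f ω :=
    fun ω => (hg_nn ⟨_, hπ0⟩ ω).trans (le_ciSup (hbdd ω) ⟨_, hπ0⟩)
  have hf_le : ∀ ω, f ω ≤ B := fun ω => ciSup_le fun π => hg_le π ω
  -- measurability via Lipschitz continuity of the value as a function of rewards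
  set Φ : (Fin H × S × A → ℝ) → ℝ := fun v =>
    ⨆ π : {π : ℕ → S → A → ℝ // IsPolicy π}, gval P μ H π.1 v with hΦ
  have hΦbdd : ∀ v, BddAbove (Set.range fun π : {π : ℕ → S → A → ℝ // IsPolicy π} =>
      gval P μ H π.1 v) := by
    intro v
    refine ⟨∑ x : Fin H × S × A, |v x|, ?_⟩
    rintro y ⟨π, rfl⟩
    have := gval_le_add hP hμnn hμ1 π.2 v 0
    simpa [gval] using this
  have hΦlip : ∀ v w, Φ v ≤ Φ w + ∑ x : Fin H × S × A, |v x - w x| := by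
    intro v w
    refine ciSup_le fun π => ?_
    exact (gval_le_add hP hμnn hμ1 π.2 v w).trans
      (add_le_add_left (le_ciSup (hΦbdd w) π) _)
  have hΦcont : Continuous Φ := by
    have : LipschitzWith (N : NNReal) Φ := by
      refine LipschitzWith.of_dist_le_mul fun v w => ?_
      have h1 := hΦlip v w
      have h2 := hΦlip w v
      have hsum : ∑ x : Fin H × S × A, |v x - w x| ≤ (N : ℝ) * dist v w := by
        calc ∑ x : Fin H × S × A, |v x - w x| ≤ ∑ _x : Fin H × S × A, dist v w :=
              Finset.sum_le_sum fun x _ => by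
                rw [← Real.dist_eq]; exact dist_le_pi_dist v w x
          _ = (N : ℝ) * dist v w := by
              rw [Finset.sum_const, Finset.card_univ, nsmul_eq_mul]
      have hsum' : ∑ x : Fin H × S × A, |w x - v x| ≤ (N : ℝ) * dist v w := by
        simpa [abs_sub_comm] using hsum
      rw [Real.dist_eq, abs_sub_le_iff]
      constructor <;> [skip; skip]
      · push_cast; linarith
      · push_cast; linarith
    exact this.continuous
  have hfmeas : Measurable f := by
    have hRvmeas : Measurable Rvec :=
      measurable_pi_lambda _ fun x => hRmeas x.1 x.2.1 x.2.2
    exact hΦcont.measurable.comp hRvmeas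
  have hfint : Integrable f := by
    refine (integrable_const B).mono' hfmeas.aestronglyMeasurable ?_
    filter_upwards with ω
    rw [Real.norm_eq_abs, abs_of_nonneg (hf_nn ω)]
    exact hf_le ω
  -- the events: reward fires exactly at x0
  set sets : (Fin H × S × A) → (Fin H × S × A) → Set ℝ := fun x0 x =>
    if x = x0 then {r x0.1 x0.2.1 x0.2.2 / ε} else {0} with hsets
  set E : (Fin H × S × A) → Set Ω := fun x0 =>
    ⋂ x ∈ (Finset.univ : Finset (Fin H × S × A)),
      (fun ω => R x.1 x.2.1 x.2.2 ω) ⁻¹' sets x0 x with hE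
  have hsetsmeas : ∀ x0 x, MeasurableSet (sets x0 x) := by
    intro x0 x
    by_cases hx : x = x0 <;> simp [hsets, hx]
  have hEmeas : ∀ x0, MeasurableSet (E x0) := by
    intro x0
    exact MeasurableSet.biInter (Set.to_countable _) fun x _ =>
      (hRmeas x.1 x.2.1 x.2.2) (hsetsmeas x0 x)
  have hEmem : ∀ x0 ω, ω ∈ E x0 ↔ ∀ x, R x.1 x.2.1 x.2.2 ω ∈ sets x0 x := by
    intro x0 ω
    simp [hE, Set.mem_iInter]
  -- single-factor probabilities
  have hfac : ∀ (x0 x : Fin H × S × A),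
      (volume : Measure Ω) ((fun ω => R x.1 x.2.1 x.2.2 ω) ⁻¹' sets x0 x)
        = if x = x0 then ENNReal.ofReal ε else ENNReal.ofReal (1 - ε) := by
    intro x0 x
    by_cases hx : x = x0
    · rw [if_pos hx]
      have : (fun ω => R x.1 x.2.1 x.2.2 ω) ⁻¹' sets x0 x
          = {ω | R x.1 x.2.1 x.2.2 ω = r x.1 x.2.1 x.2.2 / ε} := by
        ext ω; simp [hsets, hx]
      rw [this]
      exact hRprob _ _ _
    · rw [if_neg hx]
      have hpre : (fun ω => R x.1 x.2.1 x.2.2 ω) ⁻¹' sets x0 x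
          = {ω | R x.1 x.2.1 x.2.2 ω = r x.1 x.2.1 x.2.2 / ε}ᶜ := by
        ext ω
        simp only [hsets, if_neg hx, Set.mem_preimage, Set.mem_singleton_iff,
          Set.mem_compl_iff, Set.mem_setOf_eq]
        constructor
        · intro h0 hEq
          rw [h0] at hEq
          have := div_pos (hrpos x.1 x.2.1 x.2.2) hε0
          linarith [hEq.symm.le]
        · intro hneq
          rcases hRvals x.1 x.2.1 x.2.2 ω with h2 | h2
          · exact absurd h2 hneq
          · exact h2
      have hms : MeasurableSet {ω | R x.1 x.2.1 x.2.2 ω = r x.1 x.2.1 x.2.2 / ε} := by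
        have : {ω | R x.1 x.2.1 x.2.2 ω = r x.1 x.2.1 x.2.2 / ε}
            = R x.1 x.2.1 x.2.2 ⁻¹' {r x.1 x.2.1 x.2.2 / ε} := by
          ext ω; simp
        rw [this]
        exact (hRmeas _ _ _) (measurableSet_singleton _)
      rw [hpre, measure_compl hms (measure_ne_top _ _), measure_univ, hRprob,
        ← ENNReal.ofReal_one, ← ENNReal.ofReal_sub _ hε0.le]
  -- probability of each event
  have hEprob : ∀ x0, (volume : Measure Ω) (E x0)
      = ENNReal.ofReal ε * ENNReal.ofReal (1 - ε) ^ (N - 1) := by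
    intro x0
    have hind := (ProbabilityTheory.iIndepFun_iff_measure_inter_preimage_eq_mul.1 hRindep)
      Finset.univ (sets := sets x0) (fun x _ => hsetsmeas x0 x)
    rw [hE]
    rw [hind]
    rw [Finset.prod_congr rfl fun x _ => hfac x0 x,
      ← Finset.mul_prod_erase Finset.univ _ (Finset.mem_univ x0), if_pos rfl]
    congr 1
    rw [Finset.prod_congr rfl (fun x hx => if_neg (Finset.ne_of_mem_erase hx)),
      Finset.prod_const, Finset.card_erase_of_mem (Finset.mem_univ x0), Finset.card_univ]
  -- the events are pairwise disjoint
  have hEdisj : ∀ x0 x1 : Fin H × S × A, x0 ≠ x1 → Disjoint (E x0) (E x1) := by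
    intro x0 x1 hne01
    rw [Set.disjoint_left]
    intro ω h0 h1
    have ha : R x0.1 x0.2.1 x0.2.2 ω = r x0.1 x0.2.1 x0.2.2 / ε := by
      simpa [hsets] using (hEmem x0 ω).1 h0 x0
    have hb : R x0.1 x0.2.1 x0.2.2 ω = 0 := by
      simpa [hsets, hne01] using (hEmem x1 ω).1 h1 x0
    rw [hb] at ha
    have := div_pos (hrpos x0.1 x0.2.1 x0.2.2) hε0
    linarith [ha.symm.le]
  -- lower bound for f on the event E x0
  have hfE : ∀ x0 : Fin H × S × A, ∀ ω ∈ E x0,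
      (⨆ π : {π : ℕ → S → A → ℝ // IsPolicy π}, occ P μ π.1 x0.1 x0.2.1)
        * (r x0.1 x0.2.1 x0.2.2 / ε) ≤ f ω := by
    intro x0 ω hω
    have hcpos : 0 < r x0.1 x0.2.1 x0.2.2 / ε := div_pos (hrpos _ _ _) hε0
    have hkey : ∀ π : {π : ℕ → S → A → ℝ // IsPolicy π},
        occ P μ π.1 x0.1 x0.2.1 * (r x0.1 x0.2.1 x0.2.2 / ε) ≤ f ω := by
      intro π
      have hpol' := modPol_isPolicy π.2 x0.1 x0.2.1 x0.2.2
      have hle : gval P μ H (modPol π.1 x0.1 x0.2.1 x0.2.2) (Rvec ω) ≤ f ω :=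
        le_ciSup (hbdd ω) ⟨_, hpol'⟩
      have hg_eq : gval P μ H (modPol π.1 x0.1 x0.2.1 x0.2.2) (Rvec ω)
          = occ P μ π.1 x0.1 x0.2.1 * (r x0.1 x0.2.1 x0.2.2 / ε) := by
        rw [gval, Finset.sum_eq_single x0]
        · have hR0 : Rvec ω x0 = r x0.1 x0.2.1 x0.2.2 / ε := by
            simpa [hsets] using (hEmem x0 ω).1 hω x0
          rw [hR0, occSA, modPol_occ, modPol_apply_self, mul_one]
        · intro x _ hx
          have hRx : Rvec ω x = 0 := by
            simpa [hsets, hx] using (hEmem x0 ω).1 hω x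
          rw [hRx, mul_zero]
        · intro h; exact absurd (Finset.mem_univ _) h
      rw [← hg_eq]; exact hle
    have h1 : (⨆ π : {π : ℕ → S → A → ℝ // IsPolicy π}, occ P μ π.1 x0.1 x0.2.1)
        ≤ f ω / (r x0.1 x0.2.1 x0.2.2 / ε) := by
      refine ciSup_le fun π => ?_
      rw [le_div_iff₀ hcpos]
      exact hkey π
    calc (⨆ π : {π : ℕ → S → A → ℝ // IsPolicy π}, occ P μ π.1 x0.1 x0.2.1)
          * (r x0.1 x0.2.1 x0.2.2 / ε)
        ≤ (f ω / (r x0.1 x0.2.1 x0.2.2 / ε)) * (r x0.1 x0.2.1 x0.2.2 / ε) :=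
          mul_le_mul_of_nonneg_right h1 hcpos.le
      _ = f ω := div_mul_cancel₀ _ hcpos.ne'
  -- probability values in ℝ
  have htoReal : ∀ x0 : Fin H × S × A,
      ((volume : Measure Ω) (E x0)).toReal = ε * (1 - ε) ^ (N - 1) := by
    intro x0
    rw [hEprob x0, ENNReal.toReal_mul, ENNReal.toReal_pow,
      ENNReal.toReal_ofReal hε0.le, ENNReal.toReal_ofReal (by linarith)]
  -- the chain of inequalities
  have step3 : ∀ x0 : Fin H × S × A,
      ((⨆ π : {π : ℕ → S → A → ℝ // IsPolicy π}, occ P μ π.1 x0.1 x0.2.1)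
        * (r x0.1 x0.2.1 x0.2.2 / ε)) * ((volume : Measure Ω) (E x0)).toReal
        ≤ ∫ ω in E x0, f ω := fun x0 => by
    have := setIntegral_ge_of_const_le (hEmeas x0) (measure_ne_top _ _) (hfE x0)
      hfint.integrableOn
    rw [smul_eq_mul, mul_comm] at this; exact this
  have step2 : ∫ ω in ⋃ x0 ∈ (Finset.univ : Finset (Fin H × S × A)), E x0, f ω
      = ∑ x0 : Fin H × S × A, ∫ ω in E x0, f ω :=
    integral_biUnion_finset Finset.univ (fun x _ => hEmeas x)
      (fun x _ y _ hxy => hEdisj x y hxy) (fun x _ => hfint.integrableOn)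
  have step1 : ∫ ω in ⋃ x0 ∈ (Finset.univ : Finset (Fin H × S × A)), E x0, f ω
      ≤ ∫ ω, f ω :=
    setIntegral_le_integral hfint (Filter.Eventually.of_forall hf_nn)
  have hcard : N = Fintype.card S * Fintype.card A * H := by
    simp only [hN, Fintype.card_prod, Fintype.card_fin]
    ring
  rw [hf_eq,
    sum_triple (fun h s a => (⨆ π : {π : ℕ → S → A → ℝ // IsPolicy π},
      occ P μ π.1 h s) * r h s a), ← hcard]
  calc (1 - ε) ^ (N - 1) * ∑ x : Fin H × S × A,
          (⨆ π : {π : ℕ → S → A → ℝ // IsPolicy π}, occ P μ π.1 x.1 x.2.1)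
            * r x.1 x.2.1 x.2.2
      = ∑ x : Fin H × S × A,
          ((⨆ π : {π : ℕ → S → A → ℝ // IsPolicy π}, occ P μ π.1 x.1 x.2.1)
            * (r x.1 x.2.1 x.2.2 / ε)) * (ε * (1 - ε) ^ (N - 1)) := by
        rw [Finset.mul_sum]
        refine Finset.sum_congr rfl fun x _ => ?_
        field_simp
    _ = ∑ x : Fin H × S × A,
          ((⨆ π : {π : ℕ → S → A → ℝ // IsPolicy π}, occ P μ π.1 x.1 x.2.1)
            * (r x.1 x.2.1 x.2.2 / ε)) * ((volume : Measure Ω) (E x)).toReal := by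
        refine Finset.sum_congr rfl fun x _ => ?_
        rw [htoReal x]
    _ ≤ ∑ x0 : Fin H × S × A, ∫ ω in E x0, f ω :=
        Finset.sum_le_sum fun x _ => step3 x
    _ = ∫ ω in ⋃ x0 ∈ (Finset.univ : Finset (Fin H × S × A)), E x0, f ω := step2.symm
    _ ≤ ∫ ω, f ω := step1
end
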